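/- The unique solution of the IVP ∇∇_{0*}^{0.6} x(t+1) = t for t ∈ ℕ_1, with x(0) = 0 and ∇x(1) = 0, is x(t) = (t−1)^{↑2.6}/Γ(3.6). -/

import Mathlib

open Finset

/-- Generalized rising function `x^{↑μ} = Γ(x+μ)/Γ(x)` (equals 0 when `Γ x = 0`,
matching the convention `0^{↑ν} = 0`). -/
noncomputable def rise (x μ : ℝ) : ℝ := Real.Gamma (x + μ) / Real.Gamma x

/-- Nabla (backward) difference. -/
def nabla (f : ℤ → ℝ) (t : ℤ) : ℝ := f t - f (t - 1)

/-- Caputo nabla fractional difference of order `ν ∈ (0,1)` based at `a`. -/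
noncomputable def caputo (ν : ℝ) (a : ℤ) (x : ℤ → ℝ) (t : ℤ) : ℝ :=
  ∑ τ ∈ Finset.Icc (a + 1) t,
    rise ((t - τ + 1 : ℤ) : ℝ) (-ν) / Real.Gamma (1 - ν) * nabla x τ

/-- Nabla fractional sum of order `ν` based at `a`. -/
noncomputable def fsum (ν : ℝ) (a : ℤ) (f : ℤ → ℝ) (t : ℤ) : ℝ :=
  ∑ τ ∈ Finset.Icc (a + 1) t,
    rise ((t - τ + 1 : ℤ) : ℝ) (ν - 1) / Real.Gamma ν * f τ

/-- The self-adjoint operator `L_a x(t) = ∇[p(t+1)∇_{a*}^ν x(t+1)] + q(t)x(t)`. -/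
noncomputable def Lop (ν : ℝ) (a : ℤ) (p q : ℤ → ℝ) (x : ℤ → ℝ) (t : ℤ) : ℝ :=
  (p (t + 1) * caputo ν a x (t + 1) - p t * caputo ν a x t) + q t * x t

/-!
For `ν < 1` and `t = a + n + 1` the Caputo difference is the convolution
`∇_{a*}^ν x(t) = ∑_{i+j=n} multichoose(1-ν, i) ∇x(a+j+1)`, whose leading coefficient is `1`;
it therefore determines `∇x` on `t > a`, and with `x a` it determines `x`. The monomial
`(t-a-1)^{↑μ}/Γ(μ+1)` has nabla difference `multichoose(μ, t-a-2)`, so the Chu–Vandermonde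
identity for `multichoose` gives the power rule: its Caputo difference of order `ν` is the monomial
of order `μ - ν`. For `μ = 2.6`, `ν = 0.6` this is `(t-1)^{↑2}/2`, whose nabla difference at `t + 1`
is `t`; by the equation and `∇x(1) = 0` it is also the Caputo difference of `x`.
-/

theorem Ring.multichoose_add {R : Type*} [CommRing R] [BinomialRing R] (r s : R) (n : ℕ) :
    multichoose (r + s) n = ∑ ij ∈ antidiagonal n, multichoose r ij.1 * multichoose s ij.2 := by
  have h := add_choose_eq (r := -r) (s := -s) n (Commute.all _ _)
  rw [← neg_add, choose_neg'] at h
  simp only [choose_neg', smul_mul_smul_comm, ← Int.negOnePow_add] at h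
  rw [sum_congr rfl fun ij hij => by rw [← Nat.cast_add, mem_antidiagonal.mp hij], ← smul_sum] at h
  exact smul_left_cancel _ h

theorem Ring.multichoose_eq_ascPochhammer_eval_div {K : Type*} [Field K] [CharZero K] (r : K)
    (n : ℕ) : multichoose r n = (ascPochhammer K n).eval r / n.factorial := by
  rw [eq_div_iff (Nat.cast_ne_zero.mpr n.factorial_ne_zero), mul_comm, ← nsmul_eq_mul,
    factorial_nsmul_multichoose_eq_ascPochhammer, Polynomial.ascPochhammer_smeval_eq_eval]

theorem Real.Gamma_add_natCast_eq_mul_ascPochhammer {α : ℝ} (hα : 0 < α) (n : ℕ) :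
    Gamma (α + n) = Gamma α * (ascPochhammer ℝ n).eval α := by
  induction n with
  | zero => simp
  | succ n ih =>
    rw [Nat.cast_succ, ← add_assoc, Gamma_add_one (by positivity), ih, ascPochhammer_succ_eval]
    ring

theorem rise_natCast_add_one_div_Gamma {α : ℝ} (hα : 0 < α) (n : ℕ) :
    rise (n + 1) (α - 1) / Real.Gamma α = Ring.multichoose α n := by
  rw [rise, show (n : ℝ) + 1 + (α - 1) = α + n by ring,
    Real.Gamma_add_natCast_eq_mul_ascPochhammer hα, Real.Gamma_nat_eq_factorial,
    Ring.multichoose_eq_ascPochhammer_eval_div]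
  field_simp [(Real.Gamma_pos_of_pos hα).ne']

theorem caputo_sub (ν : ℝ) (a : ℤ) (x y : ℤ → ℝ) (t : ℤ) :
    caputo ν a (x - y) t = caputo ν a x t - caputo ν a y t := by
  rw [caputo, caputo, caputo, ← sum_sub_distrib]
  refine sum_congr rfl fun τ _ => ?_
  simp only [nabla, Pi.sub_apply]
  ring

theorem caputo_eq_nabla {ν : ℝ} (hν : Real.Gamma (1 - ν) ≠ 0) {a t : ℤ} {x : ℤ → ℝ} (ht : a < t)
    (hx : ∀ τ, a < τ → τ < t → nabla x τ = 0) : caputo ν a x t = nabla x t := by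
  rw [caputo, sum_eq_single_of_mem t (mem_Icc.mpr ⟨by omega, le_rfl⟩)]
  · simp [rise, ← sub_eq_add_neg, hν]
  · intro τ hτ hne
    rw [mem_Icc] at hτ
    rw [hx τ (by omega) (by omega), mul_zero]

theorem nabla_eq_zero_of_caputo_eq_zero {ν : ℝ} (hν : Real.Gamma (1 - ν) ≠ 0) {a : ℤ}
    {x : ℤ → ℝ} (hx : ∀ t, a < t → caputo ν a x t = 0) (t : ℤ) (ht : a < t) : nabla x t = 0 := by
  suffices ∀ t, a ≤ t → ∀ τ, a < τ → τ ≤ t → nabla x τ = 0 from this t ht.le t ht le_rfl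
  intro t ht
  induction t, ht using Int.leInduction with
  | base => intro τ hτ hτ'; omega
  | succ t ht ih =>
    intro τ hτ hτ'
    rcases lt_or_eq_of_le hτ' with hlt | rfl
    · exact ih τ hτ (by omega)
    · rw [← caputo_eq_nabla hν hτ fun σ hσ hσ' => ih σ hσ (by omega), hx _ hτ]

theorem eq_of_caputo_eq {ν : ℝ} (hν : Real.Gamma (1 - ν) ≠ 0) {a : ℤ} {x y : ℤ → ℝ}
    (ha : x a = y a) (h : ∀ t, a < t → caputo ν a x t = caputo ν a y t) (t : ℤ) (ht : a ≤ t) :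
    x t = y t := by
  have hd : ∀ t, a < t → nabla (x - y) t = 0 :=
    nabla_eq_zero_of_caputo_eq_zero hν fun t ht => by rw [caputo_sub, h t ht, sub_self]
  induction t, ht using Int.leInduction with
  | base => exact ha
  | succ t ht ih =>
    have := hd (t + 1) (by omega)
    simp only [nabla, Pi.sub_apply, add_sub_cancel_right, ih] at this
    linarith

theorem caputo_add_natCast_add_one {ν : ℝ} (hν : ν < 1) (a : ℤ) (x : ℤ → ℝ) (n : ℕ) :
    caputo ν a x (a + n + 1) =
      ∑ ij ∈ antidiagonal n, Ring.multichoose (1 - ν) ij.1 * nabla x (a + ij.2 + 1) := by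
  symm
  refine sum_nbij' (fun ij => a + ij.2 + 1) (fun τ => ((a + n + 1 - τ).toNat, (τ - a - 1).toNat))
    ?_ ?_ ?_ ?_ ?_
  · intro ij hij
    simp only [HasAntidiagonal.mem_antidiagonal, mem_Icc] at hij ⊢
    omega
  · intro τ hτ
    simp only [HasAntidiagonal.mem_antidiagonal, mem_Icc] at hτ ⊢
    omega
  · intro ij hij
    rw [HasAntidiagonal.mem_antidiagonal] at hij
    exact Prod.ext (by omega) (by omega)
  · intro τ hτ
    rw [mem_Icc] at hτ
    omega
  · intro ij hij
    rw [HasAntidiagonal.mem_antidiagonal] at hij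
    have hk : ((a + n + 1 - (a + ij.2 + 1) + 1 : ℤ) : ℝ) = (ij.1 : ℝ) + 1 := by
      rw [← hij]
      push_cast
      ring
    rw [hk, show -ν = (1 - ν) - 1 by ring, rise_natCast_add_one_div_Gamma (by linarith)]

/-- The nabla Taylor monomial `(t - a - 1)^{↑μ} / Γ(μ + 1)`. For `t ≤ a + 1` it is `0`, through
the convention `Real.Gamma (-n) = 0` at the poles of `Γ`. -/
noncomputable def nablaMonomial (μ : ℝ) (a t : ℤ) : ℝ :=
  rise ((t - a - 1 : ℤ) : ℝ) μ / Real.Gamma (μ + 1)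

theorem nablaMonomial_of_le (μ : ℝ) {a t : ℤ} (ht : t ≤ a + 1) : nablaMonomial μ a t = 0 := by
  obtain ⟨m, hm⟩ : ∃ m : ℕ, t - a - 1 = -m := ⟨(a + 1 - t).toNat, by omega⟩
  rw [nablaMonomial, rise, hm, Int.cast_neg, Int.cast_natCast, Real.Gamma_neg_nat_eq_zero,
    div_zero, zero_div]

theorem nablaMonomial_add_natCast_add_two {μ : ℝ} (hμ : -1 < μ) (a : ℤ) (n : ℕ) :
    nablaMonomial μ a (a + n + 2) = Ring.multichoose (μ + 1) n := by
  rw [nablaMonomial, show ((a + n + 2 - a - 1 : ℤ) : ℝ) = n + 1 by push_cast; ring,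
    ← rise_natCast_add_one_div_Gamma (by linarith), add_sub_cancel_right]

theorem nabla_nablaMonomial_add_one (μ : ℝ) (a : ℤ) : nabla (nablaMonomial μ a) (a + 1) = 0 := by
  rw [nabla, nablaMonomial_of_le μ le_rfl, nablaMonomial_of_le μ (by omega), sub_zero]

theorem nabla_nablaMonomial_add_natCast_add_two {μ : ℝ} (hμ : -1 < μ) (a : ℤ) (n : ℕ) :
    nabla (nablaMonomial μ a) (a + n + 2) = Ring.multichoose μ n := by
  rw [nabla, nablaMonomial_add_natCast_add_two hμ]
  cases n with
  | zero =>
    rw [Nat.cast_zero, add_zero, add_sub_assoc, nablaMonomial_of_le μ (by omega),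
      Ring.multichoose_zero_right, Ring.multichoose_zero_right, sub_zero]
  | succ n =>
    rw [show a + (n + 1 : ℕ) + 2 - 1 = a + n + 2 by push_cast; ring,
      nablaMonomial_add_natCast_add_two hμ, Ring.multichoose_succ_succ, add_sub_cancel_right]

theorem caputo_nablaMonomial {ν μ : ℝ} (hν : ν < 1) (hμ : -1 < μ) (hμν : -1 < μ - ν) {a t : ℤ}
    (ht : a < t) : caputo ν a (nablaMonomial μ a) t = nablaMonomial (μ - ν) a t := by
  obtain ⟨n, rfl⟩ : ∃ n : ℕ, t = a + n + 1 := ⟨(t - a - 1).toNat, by omega⟩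
  rw [caputo_add_natCast_add_one hν]
  cases n with
  | zero => simp [nabla_nablaMonomial_add_one, nablaMonomial_of_le]
  | succ n =>
    rw [Finset.Nat.sum_antidiagonal_succ']
    dsimp only
    rw [Nat.cast_zero, add_zero, nabla_nablaMonomial_add_one, mul_zero, zero_add,
      show a + (n + 1 : ℕ) + 1 = a + n + 2 by push_cast; ring,
      nablaMonomial_add_natCast_add_two hμν, show μ - ν + 1 = (1 - ν) + μ by ring,
      Ring.multichoose_add]
    refine sum_congr rfl fun ij _ => ?_
    rw [show a + (ij.2 + 1 : ℕ) + 1 = a + ij.2 + 2 by push_cast; ring,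
      nabla_nablaMonomial_add_natCast_add_two hμ]

theorem example_selfadjoint_ivp (x : ℤ → ℝ) (h0 : x 0 = 0) (h1 : nabla x 1 = 0)
    (heq : ∀ t : ℤ, 1 ≤ t →
      caputo 0.6 0 x (t + 1) - caputo 0.6 0 x t = (t : ℝ)) :
    ∀ t : ℤ, 0 ≤ t → x t = rise ((t - 1 : ℤ) : ℝ) 2.6 / Real.Gamma 3.6 := by
  have hΓ : Real.Gamma (1 - 0.6) ≠ 0 := (Real.Gamma_pos_of_pos (by norm_num)).ne'
  have hx (t : ℤ) (ht : 1 ≤ t) : caputo 0.6 0 x t = nablaMonomial 2 0 t := by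
    induction t, ht using Int.leInduction with
    | base => rw [caputo_eq_nabla hΓ one_pos (by omega), h1, nablaMonomial_of_le 2 (by norm_num)]
    | succ t ht ih =>
      have hstep : nabla (nablaMonomial 2 0) (t + 1) = t := by
        obtain ⟨n, rfl⟩ : ∃ n : ℕ, t = n + 1 := ⟨(t - 1).toNat, by omega⟩
        rw [show (n : ℤ) + 1 + 1 = 0 + n + 2 by ring,
          nabla_nablaMonomial_add_natCast_add_two (by norm_num), Ring.multichoose_two]
        push_cast
        ring
      rw [nabla, add_sub_cancel_right] at hstep
      linarith [heq t ht]
  have hY (t : ℤ) (ht : 0 < t) : caputo 0.6 0 (nablaMonomial 2.6 0) t = nablaMonomial 2 0 t := by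
    rw [caputo_nablaMonomial (by norm_num) (by norm_num) (by norm_num) ht]
    norm_num
  intro t ht
  rw [eq_of_caputo_eq hΓ (h0.trans (nablaMonomial_of_le 2.6 (by norm_num)).symm)
    (fun t ht => (hx t ht).trans (hY t ht).symm) t ht, nablaMonomial]
  norm_num
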